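/- For a polynomial ring Z[u,v] and n ≥ 3, with F(z) = (z+u)(z+v), the following coefficient-extraction identities hold (where [z^1][F(z)^1]G means: write G uniquely as Σ_{i,j} a_{ij} z^i F(z)^j with i ∈ {0,1} and extract the coefficient a_{11}): [z^1][F^1](F(z)(z+u)^k) = (u−v)^{k−1}, [z^1][F^1]((z+u)^k) = (k−2)(u−v)^{k−3}, [z^1][F^1](F(z)(z+v)^k) = (v−u)^{k−1}, and [z^1][F^1]((z+v)^k) = (k−2)(v−u)^{k−3}, for k ≥ 3. -/
import Mathlib
open Polynomial

private lemma key {R : Type*} [CommRing R] (a b : R) : ∀ m : ℕ, ∃ Q : Polynomial R,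
    (X + C a) ^ (m + 3) =
      ((X + C a) * (X + C b)) ^ 2 * Q
      + (X + C a) * (X + C b) *
          (C (((m : R) + 2) * (a - b) ^ (m + 1)) + (X + C b) * C (((m : R) + 1) * (a - b) ^ m))
      + (C ((a - b) ^ (m + 3)) + (X + C b) * C ((a - b) ^ (m + 2))) := by
  intro m
  induction m with
  | zero =>
      refine ⟨0, ?_⟩
      push_cast
      simp only [map_mul, map_add, map_sub, map_pow, map_one, map_zero, map_ofNat]
      ring
  | succ n ih =>
      obtain ⟨Q, hQ⟩ := ih
      refine ⟨Q * (X + C a) + C (((n : R) + 1) * (a - b) ^ n), ?_⟩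
      have : (X + C a) ^ (n + 1 + 3) = (X + C a) ^ (n + 3) * (X + C a) := by ring
      rw [this, hQ]
      push_cast
      simp only [map_mul, map_add, map_sub, map_pow, map_one, map_zero, map_ofNat]
      ring

private lemma coeff_one_aux {R : Type*} [CommRing R] (b e f : R) :
    (C e + (X + C b) * C f).coeff 1 = f := by
  have h : C e + (X + C b) * C f = C f * X + C (b * f + e) := by
    rw [map_add, map_mul]; ring
  rw [h]
  simp

private lemma main_aux {R : Type*} [CommRing R] [Nontrivial R] (a b : R) (m : ℕ)
    (F : Polynomial R) (hF : F = (X + C a) * (X + C b)) :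
    ((F * (X + C a) ^ (m + 3) /ₘ F) %ₘ F).coeff 1 = (a - b) ^ (m + 2) ∧
    (((X + C a) ^ (m + 3) /ₘ F) %ₘ F).coeff 1 = ((m : R) + 1) * (a - b) ^ m := by
  subst hF
  set F : Polynomial R := (X + C a) * (X + C b) with hF
  have Fmonic : F.Monic := (monic_X_add_C a).mul (monic_X_add_C b)
  have hdeg : F.degree = 2 := by
    rw [hF, (monic_X_add_C b).degree_mul, degree_X_add_C, degree_X_add_C]; rfl
  have degb : ∀ e f : R, (C e + (X + C b) * C f).degree < F.degree := by
    intro e f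
    have h : C e + (X + C b) * C f = C f * X + C (b * f + e) := by
      rw [map_add, map_mul]; ring
    rw [h, hdeg]
    exact degree_linear_le.trans_lt (by decide)
  obtain ⟨Q, hQ⟩ := key a b m
  set inner : Polynomial R :=
    C (((m : R) + 2) * (a - b) ^ (m + 1)) + (X + C b) * C (((m : R) + 1) * (a - b) ^ m)
    with hinner
  set r₀ : Polynomial R := C ((a - b) ^ (m + 3)) + (X + C b) * C ((a - b) ^ (m + 2)) with hr₀
  have h1 := div_modByMonic_unique (f := (X + C a) ^ (m + 3)) (F * Q + inner) r₀ Fmonic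
    ⟨by rw [hQ, hinner, hr₀, hF]; ring, degb _ _⟩
  have h2 := div_modByMonic_unique (f := F * Q + inner) Q inner Fmonic
    ⟨by ring, degb _ _⟩
  have h3 := div_modByMonic_unique (f := F * (X + C a) ^ (m + 3)) ((X + C a) ^ (m + 3)) 0 Fmonic
    ⟨by ring, by rw [degree_zero, hdeg]; decide⟩
  constructor
  · rw [h3.1, h1.2, hr₀, coeff_one_aux]
  · rw [h1.1, h2.2, hinner, coeff_one_aux]

/-- Over `R = ℤ[u,v]`, with `F(z) = (z+u)(z+v)`, write any polynomial
`G(z)` uniquely as `Σ a_{ij} z^i F(z)^j` with `i ∈ {0,1}`; the coefficient `a₁₁` is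
`((G /ₘ F) %ₘ F).coeff 1`.  Then for `k ≥ 3`:
`[z¹][F¹](F·(z+u)^k) = (u−v)^(k−1)`, `[z¹][F¹]((z+u)^k) = (k−2)(u−v)^(k−3)`,
`[z¹][F¹](F·(z+v)^k) = (v−u)^(k−1)`, `[z¹][F¹]((z+v)^k) = (k−2)(v−u)^(k−3)`. -/
theorem stmt17 (k : ℕ) (hk : 3 ≤ k)
    (u v : MvPolynomial (Fin 2) ℤ) (hu : u = MvPolynomial.X 0)
    (hv : v = MvPolynomial.X 1)
    (F : Polynomial (MvPolynomial (Fin 2) ℤ)) (hF : F = (X + C u) * (X + C v)) :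
    ((F * (X + C u) ^ k /ₘ F) %ₘ F).coeff 1 = (u - v) ^ (k - 1) ∧
    (((X + C u) ^ k /ₘ F) %ₘ F).coeff 1 = ((k : MvPolynomial (Fin 2) ℤ) - 2) * (u - v) ^ (k - 3) ∧
    ((F * (X + C v) ^ k /ₘ F) %ₘ F).coeff 1 = (v - u) ^ (k - 1) ∧
    (((X + C v) ^ k /ₘ F) %ₘ F).coeff 1 = ((k : MvPolynomial (Fin 2) ℤ) - 2) * (v - u) ^ (k - 3) := by
  obtain ⟨m, rfl⟩ : ∃ m, k = m + 3 := ⟨k - 3, by omega⟩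
  have h1 := main_aux u v m F hF
  have h2 := main_aux v u m F (by rw [hF]; ring)
  have e1 : m + 3 - 1 = m + 2 := by omega
  have e3 : m + 3 - 3 = m := by omega
  have ec : ((m + 3 : ℕ) : MvPolynomial (Fin 2) ℤ) - 2 = (m : MvPolynomial (Fin 2) ℤ) + 1 := by
    push_cast; ring
  rw [e1, e3, ec]
  exact ⟨h1.1, h1.2, h2.1, h2.2⟩
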